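/- Let Φ: G → H be a right-resolving homomorphism between finite graphs, I a state of H, and I₁, I₂ in the fiber of I. Then I₁ ∼_Φ I₂ if and only if I₁·u = I₂·u for every path u in H starting at I such that (∂Φ)⁻¹(I)·u is a minimal image. -/
import Mathlib


/-- A finite directed multigraph. -/
structure FinGraph where
  V : Type
  E : Type
  [fintV : Fintype V]
  [fintE : Fintype E]
  [decV : DecidableEq V]
  [decE : DecidableEq E]
  src : E → V
  tgt : E → V

attribute [instance] FinGraph.fintV FinGraph.fintE FinGraph.decV FinGraph.decE

/-- A graph homomorphism. -/
structure GHom (G H : FinGraph) where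
  eMap : G.E → H.E
  vMap : G.V → H.V
  src_eq : ∀ e, H.src (eMap e) = vMap (G.src e)
  tgt_eq : ∀ e, H.tgt (eMap e) = vMap (G.tgt e)

def GHom.comp {G K H : FinGraph} (Δ : GHom K H) (Ψ : GHom G K) : GHom G H where
  eMap := Δ.eMap ∘ Ψ.eMap
  vMap := Δ.vMap ∘ Ψ.vMap
  src_eq := fun e => by
    simp only [Function.comp_apply, Δ.src_eq, Ψ.src_eq]
  tgt_eq := fun e => by
    simp only [Function.comp_apply, Δ.tgt_eq, Ψ.tgt_eq]

/-- The restriction of a homomorphism to the outgoing edges of a state. -/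
def outMap {G H : FinGraph} (Φ : GHom G H) (I : G.V) :
    {e : G.E // G.src e = I} → {f : H.E // H.src f = Φ.vMap I} :=
  fun e => ⟨Φ.eMap e.1, (Φ.src_eq e.1).trans (congrArg Φ.vMap e.2)⟩

/-- A right-resolver: a surjective homomorphism restricting to a bijection
on the outgoing edges of each state. -/
def IsRR {G H : FinGraph} (Φ : GHom G H) : Prop :=
  Function.Surjective Φ.vMap ∧ ∀ I : G.V, Function.Bijective (outMap Φ I)

/-- `IsPathFrom H I u`: the edge list `u` is a path in `H` starting at `I`. -/
def IsPathFrom (H : FinGraph) : H.V → List H.E → Prop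
  | _, [] => True
  | I, e :: u => H.src e = I ∧ IsPathFrom H (H.tgt e) u

/-- The terminal state of a path starting at `I`. -/
def pathEnd (H : FinGraph) (I : H.V) (u : List H.E) : H.V :=
  u.foldl (fun _ e => H.tgt e) I

/-- One-step transition: `I · a` is the target of the unique edge at `I`
lifting `a` (when `Φ` is right-resolving and `a` starts at the image of `I`). -/
noncomputable def step {G H : FinGraph} (Φ : GHom G H) (I : G.V) (a : H.E) : G.V :=
  if h : ∃ e : G.E, G.src e = I ∧ Φ.eMap e = a then G.tgt h.choose else I

/-- Transition along a word: `I · u`. -/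
noncomputable def transPath {G H : FinGraph} (Φ : GHom G H) (I : G.V) (u : List H.E) : G.V :=
  u.foldl (step Φ) I

/-- The stability relation of a right-resolver. -/
def Stable {G H : FinGraph} (Φ : GHom G H) (I₁ I₂ : G.V) : Prop :=
  Φ.vMap I₁ = Φ.vMap I₂ ∧
  ∀ u : List H.E, IsPathFrom H (Φ.vMap I₁) u →
    ∃ v : List H.E, IsPathFrom H (pathEnd H (Φ.vMap I₁) u) v ∧
      transPath Φ I₁ (u ++ v) = transPath Φ I₂ (u ++ v)

/-- A right-resolver is synchronizing if each fiber of its state map is a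
single stability class. -/
def Synchronizing {G H : FinGraph} (Φ : GHom G H) : Prop :=
  ∀ I₁ I₂ : G.V, Φ.vMap I₁ = Φ.vMap I₂ → Stable Φ I₁ I₂

/-- The fiber of the state map over a state of the codomain. -/
def fiber {G H : FinGraph} (Φ : GHom G H) (I : H.V) : Set G.V := {J | Φ.vMap J = I}

/-- The image `U · u` of a set of states under transition along a word. -/
noncomputable def setTrans {G H : FinGraph} (Φ : GHom G H) (U : Set G.V)
    (u : List H.E) : Set G.V :=
  (fun J => transPath Φ J u) '' U

/-- A minimal image of a right-resolver. -/
def IsMinImage {G H : FinGraph} (Φ : GHom G H) (U : Set G.V) : Prop :=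
  ∃ (I : H.V) (u : List H.E), IsPathFrom H I u ∧ U = setTrans Φ (fiber Φ I) u ∧
    ∀ v : List H.E, IsPathFrom H (pathEnd H I u) v →
      (setTrans Φ U v).ncard = U.ncard

/-- Strong connectedness: a directed path between every ordered pair of states. -/
def StronglyConnected (G : FinGraph) : Prop :=
  ∀ I J : G.V, ∃ u : List G.E, IsPathFrom G I u ∧ pathEnd G I u = J


theorem transPath_append {G H : FinGraph} (Φ : GHom G H) (J : G.V) (u v : List H.E) :
    transPath Φ J (u ++ v) = transPath Φ (transPath Φ J u) v := by
  simp [transPath, List.foldl_append]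

theorem pathEnd_append (H : FinGraph) (I : H.V) (u v : List H.E) :
    pathEnd H I (u ++ v) = pathEnd H (pathEnd H I u) v := by
  simp [pathEnd, List.foldl_append]

theorem isPathFrom_append (H : FinGraph) (I : H.V) (u v : List H.E) :
    IsPathFrom H I (u ++ v) ↔ IsPathFrom H I u ∧ IsPathFrom H (pathEnd H I u) v := by
  induction u generalizing I with
  | nil => simp [IsPathFrom, pathEnd]
  | cons e u ih =>
      simp only [List.cons_append, IsPathFrom, List.append_eq, ih, pathEnd, List.foldl_cons, and_assoc]

theorem setTrans_append {G H : FinGraph} (Φ : GHom G H) (U : Set G.V) (u v : List H.E) :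
    setTrans Φ (setTrans Φ U u) v = setTrans Φ U (u ++ v) := by
  simp only [setTrans, Set.image_image, transPath_append]

/-- two states of a fiber are stable iff they are merged by
every word whose image of the fiber is a minimal image. -/
theorem stable_iff_merged_on_minimal_images {G H : FinGraph} (Φ : GHom G H)
    (hΦ : IsRR Φ) (I : H.V) (I₁ I₂ : G.V)
    (h₁ : Φ.vMap I₁ = I) (h₂ : Φ.vMap I₂ = I) :
    Stable Φ I₁ I₂ ↔
      ∀ u : List H.E, IsPathFrom H I u →
        (∀ v : List H.E, IsPathFrom H (pathEnd H I u) v →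
          (setTrans Φ (setTrans Φ (fiber Φ I) u) v).ncard
            = (setTrans Φ (fiber Φ I) u).ncard) →
        transPath Φ I₁ u = transPath Φ I₂ u := by
  constructor
  · rintro ⟨-, hstab⟩ u hu hmin
    obtain ⟨v, hv, heq⟩ := hstab u (by rwa [h₁])
    rw [h₁] at hv
    have hcard := hmin v hv
    have hinj : Set.InjOn (fun J => transPath Φ J v) (setTrans Φ (fiber Φ I) u) := by
      refine Set.injOn_of_ncard_image_eq ?_ (Set.toFinite _)
      simpa only [setTrans] using hcard
    have m1 : transPath Φ I₁ u ∈ setTrans Φ (fiber Φ I) u :=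
      Set.mem_image_of_mem _ h₁
    have m2 : transPath Φ I₂ u ∈ setTrans Φ (fiber Φ I) u :=
      Set.mem_image_of_mem _ h₂
    exact hinj m1 m2 (by simpa [transPath_append] using heq)
  · intro hmerge
    refine ⟨h₁.trans h₂.symm, ?_⟩
    intro u hu
    rw [h₁] at hu ⊢
    set S : Set ℕ := {n | ∃ v : List H.E, IsPathFrom H (pathEnd H I u) v ∧
      (setTrans Φ (fiber Φ I) (u ++ v)).ncard = n} with hS
    have hne : S.Nonempty := ⟨_, [], trivial, rfl⟩
    obtain ⟨v, hv, hvc⟩ := Nat.sInf_mem hne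
    refine ⟨v, hv, ?_⟩
    have huv : IsPathFrom H I (u ++ v) := (isPathFrom_append H I u v).2 ⟨hu, hv⟩
    have key := hmerge (u ++ v) huv ?_
    · simpa [transPath_append] using key
    · intro w hw
      refine le_antisymm ?_ ?_
      · exact Set.ncard_image_le (Set.toFinite _)
      · rw [setTrans_append, List.append_assoc, hvc]
        refine Nat.sInf_le ⟨v ++ w, ?_, rfl⟩
        rw [isPathFrom_append]
        exact ⟨hv, by rwa [pathEnd_append H I u v] at hw⟩
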